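/- For every t > 0 and every x ∈ ℝ^d, the gradient of the smoothed objective is the posterior expectation of the gradient of f: ∇_x g(x;t) = ∫_{ℝ^d} ∇f(y) · p_{0|t}(y|x) dy. -/

import Mathlib

/-!
Differentiating `p(x;t) = ∫ p₀(y) k(x - y;t) dy` under the integral sign puts the derivative on
the kernel, which is legitimate because `k` and `∇k` are bounded and `p₀` is integrable. Since
`∇ₓ k(x - y) = -∇_y k(x - y)`, an integration by parts without boundary terms (`p₀ k`, `p₀ ∇k`
and `∇p₀ k` are integrable) moves it onto `p₀`, whose gradient is `-λ⁻¹ p₀ ∇f`. Hence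
`∇p(x) = -λ⁻¹ ∫ ∇f(y) p₀(y) k(x - y) dy`, and `∇g = -λ ∇p / p` is the posterior mean of `∇f`.
-/

open MeasureTheory
open scoped RealInnerProductSpace

/-- The Gibbs density `p₀(y) = e^{-f(y)/λ} / ∫ e^{-f(z)/λ} dz`. -/
noncomputable def gibbs {d : ℕ} (lam : ℝ) (f : EuclideanSpace ℝ (Fin d) → ℝ)
    (y : EuclideanSpace ℝ (Fin d)) : ℝ :=
  Real.exp (-(f y) / lam) / ∫ z, Real.exp (-(f z) / lam)

/-- The Gaussian kernel `k(z;t) = (2πt)^{-d/2} e^{-‖z‖²/(2t)}`. -/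
noncomputable def gaussK {d : ℕ} (t : ℝ) (z : EuclideanSpace ℝ (Fin d)) : ℝ :=
  (2 * Real.pi * t) ^ (-(d : ℝ) / 2) * Real.exp (-‖z‖ ^ 2 / (2 * t))

/-- The smoothed density `p(x;t) = ∫ p₀(y) k(x-y;t) dy`. -/
noncomputable def smoothedDensity {d : ℕ} (lam : ℝ) (f : EuclideanSpace ℝ (Fin d) → ℝ)
    (t : ℝ) (x : EuclideanSpace ℝ (Fin d)) : ℝ :=
  ∫ y, gibbs lam f y * gaussK t (x - y)

/-- The smoothed objective `g(x;t) = -λ log p(x;t)`. -/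
noncomputable def smoothedObj {d : ℕ} (lam : ℝ) (f : EuclideanSpace ℝ (Fin d) → ℝ)
    (t : ℝ) (x : EuclideanSpace ℝ (Fin d)) : ℝ :=
  -lam * Real.log (smoothedDensity lam f t x)

/-- The posterior density `p_{0|t}(y|x) = p₀(y) k(x-y;t) / p(x;t)`. -/
noncomputable def posterior {d : ℕ} (lam : ℝ) (f : EuclideanSpace ℝ (Fin d) → ℝ)
    (t : ℝ) (x y : EuclideanSpace ℝ (Fin d)) : ℝ :=
  gibbs lam f y * gaussK t (x - y) / smoothedDensity lam f t x

section ConvolutionDerivative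

variable {E : Type*} [NormedAddCommGroup E] [NormedSpace ℝ E] [FiniteDimensional ℝ E]
  [MeasurableSpace E] [BorelSpace E] {μ : Measure E} {φ k : E → ℝ} {φ' k' : E → E →L[ℝ] ℝ}

theorem hasFDerivAt_integral_mul_comp_sub_of_fderiv_bounded (hφ : Integrable φ μ)
    (hk : ∀ z, HasFDerivAt k (k' z) z) (hk' : Continuous k') {K K' : ℝ}
    (hkK : ∀ z, ‖k z‖ ≤ K) (hk'K' : ∀ z, ‖k' z‖ ≤ K') (x : E) :
    HasFDerivAt (fun x => ∫ y, φ y * k (x - y) ∂μ) (∫ y, φ y • k' (x - y) ∂μ) x := by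
  have hkc : Continuous k := continuous_iff_continuousAt.2 fun z => (hk z).continuousAt
  refine hasFDerivAt_integral_of_dominated_of_fderiv_le (μ := μ)
    (F := fun x y => φ y * k (x - y)) (F' := fun x y => φ y • k' (x - y))
    (bound := fun y => K' * ‖φ y‖)
    Filter.univ_mem (Filter.Eventually.of_forall fun x' => ?_) ?_ ?_ ?_ (hφ.norm.const_mul K') ?_
  · exact hφ.aestronglyMeasurable.mul (hkc.comp (continuous_sub_left x')).aestronglyMeasurable
  · exact hφ.mul_bdd (hkc.comp (continuous_sub_left x)).aestronglyMeasurable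
      (Filter.Eventually.of_forall fun y => hkK _)
  · exact hφ.aestronglyMeasurable.smul (hk'.comp (continuous_sub_left x)).aestronglyMeasurable
  · refine Filter.Eventually.of_forall fun y x' _ => ?_
    rw [norm_smul, mul_comm]
    exact mul_le_mul_of_nonneg_right (hk'K' _) (norm_nonneg _)
  · refine Filter.Eventually.of_forall fun y x' _ => ?_
    exact ((hk (x' - y)).comp x' ((hasFDerivAt_id x').sub_const y)).const_mul (φ y)

theorem integral_smul_fderiv_comp_sub_eq [μ.IsAddHaarMeasure]
    (hφ : ∀ y, HasFDerivAt φ (φ' y) y) (hk : ∀ z, HasFDerivAt k (k' z) z) (x : E)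
    (hφk : Integrable (fun y => φ y * k (x - y)) μ)
    (hφk' : Integrable (fun y => φ y • k' (x - y)) μ)
    (hφ'k : Integrable (fun y => k (x - y) • φ' y) μ) :
    ∫ y, φ y • k' (x - y) ∂μ = ∫ y, k (x - y) • φ' y ∂μ := by
  ext v
  rw [ContinuousLinearMap.integral_apply hφk', ContinuousLinearMap.integral_apply hφ'k]
  have hkx : ∀ y, HasFDerivAt (fun y => k (x - y)) (-k' (x - y)) y := fun y =>
    ((hk (x - y)).comp y ((hasFDerivAt_id y).const_sub x)).congr_fderiv (by ext; simp)
  have := integral_bilinear_hasFDerivAt_right_eq_neg_left_of_integrable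
    (B := ContinuousLinearMap.mul ℝ ℝ) (v := v) (μ := μ) (f := φ) (g := fun y => k (x - y))
    (f' := φ') (g' := fun y => -k' (x - y)) ?_ ?_ hφk (fun y _ => hφ y) (fun y _ => hkx y)
  · simpa [mul_comm, integral_neg] using this
  · simpa [mul_comm] using hφ'k.apply_continuousLinearMap v
  · simpa using (hφk'.apply_continuousLinearMap v).neg

theorem hasFDerivAt_integral_mul_comp_sub [μ.IsAddHaarMeasure] (hφ : Integrable φ μ)
    (hφ' : ∀ y, HasFDerivAt φ (φ' y) y) (hφ'_int : Integrable φ' μ)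
    (hk : ∀ z, HasFDerivAt k (k' z) z) (hk' : Continuous k') {K K' : ℝ}
    (hkK : ∀ z, ‖k z‖ ≤ K) (hk'K' : ∀ z, ‖k' z‖ ≤ K') (x : E) :
    HasFDerivAt (fun x => ∫ y, φ y * k (x - y) ∂μ) (∫ y, k (x - y) • φ' y ∂μ) x := by
  have hkc : Continuous k := continuous_iff_continuousAt.2 fun z => (hk z).continuousAt
  rw [← integral_smul_fderiv_comp_sub_eq hφ' hk x
    (hφ.mul_bdd (hkc.comp (continuous_sub_left x)).aestronglyMeasurable
      (Filter.Eventually.of_forall fun y => hkK _))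
    (hφ.smul_bdd K' (hk'.comp (continuous_sub_left x)).aestronglyMeasurable
      (Filter.Eventually.of_forall fun y => hk'K' _))
    (hφ'_int.bdd_smul K (hkc.comp (continuous_sub_left x)).aestronglyMeasurable
      (Filter.Eventually.of_forall fun y => hkK _))]
  exact hasFDerivAt_integral_mul_comp_sub_of_fderiv_bounded hφ hk hk' hkK hk'K' x

end ConvolutionDerivative

theorem Real.mul_exp_neg_sq_div_le {s : ℝ} (hs : 0 < s) (r : ℝ) :
    r * Real.exp (-r ^ 2 / s) ≤ √s / 2 := by
  have hsq := Real.sq_sqrt hs.le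
  have hsqrt := Real.sqrt_pos.2 hs
  rw [neg_div, Real.exp_neg, ← div_eq_mul_inv, div_le_iff₀ (Real.exp_pos _)]
  have amgm : √s / 2 * (r ^ 2 / s + 1) - r = (r - √s) ^ 2 / (2 * √s) := by
    field_simp
    linear_combination r ^ 2 * hsq
  calc r ≤ √s / 2 * (r ^ 2 / s + 1) := by
        have : 0 ≤ (r - √s) ^ 2 / (2 * √s) := by positivity
        linarith
    _ ≤ √s / 2 * Real.exp (r ^ 2 / s) :=
        mul_le_mul_of_nonneg_left (Real.add_one_le_exp _) (by positivity)

section GaussianKernel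

variable {d : ℕ} {t : ℝ}

noncomputable def gaussKDeriv (t : ℝ) (z : EuclideanSpace ℝ (Fin d)) :
    StrongDual ℝ (EuclideanSpace ℝ (Fin d)) :=
  -(t⁻¹ * gaussK t z) • innerSL ℝ z

theorem gaussK_pos (ht : 0 < t) (z : EuclideanSpace ℝ (Fin d)) : 0 < gaussK t z := by
  unfold gaussK
  positivity

theorem gaussK_le (ht : 0 < t) (z : EuclideanSpace ℝ (Fin d)) :
    gaussK t z ≤ (2 * Real.pi * t) ^ (-(d : ℝ) / 2) := by
  refine mul_le_of_le_one_right (by positivity) (Real.exp_le_one_iff.2 ?_)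
  exact div_nonpos_of_nonpos_of_nonneg (neg_nonpos.2 (sq_nonneg _)) (by positivity)

theorem hasFDerivAt_gaussK (z : EuclideanSpace ℝ (Fin d)) :
    HasFDerivAt (gaussK t) (gaussKDeriv t z) z := by
  have hexponent : HasFDerivAt (fun z : EuclideanSpace ℝ (Fin d) => -‖z‖ ^ 2 / (2 * t))
      (-(2 * t)⁻¹ • (2 • innerSL ℝ z)) z := by
    refine ((hasStrictFDerivAt_norm_sq z).hasFDerivAt.const_mul (-(2 * t)⁻¹)).congr_of_eventuallyEq
      (Filter.Eventually.of_forall fun w => ?_)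
    ring
  refine ((hexponent.exp).const_mul ((2 * Real.pi * t) ^ (-(d : ℝ) / 2))).congr_fderiv ?_
  ext v
  simp only [gaussKDeriv, gaussK, neg_smul, neg_apply, smul_apply, coe_innerSL_apply,
    nsmul_eq_mul, smul_eq_mul]
  ring

theorem continuous_gaussK : Continuous (gaussK (d := d) t) :=
  continuous_iff_continuousAt.2 fun z => (hasFDerivAt_gaussK z).continuousAt

theorem continuous_gaussKDeriv : Continuous (gaussKDeriv (d := d) t) := by
  have := continuous_gaussK (d := d) (t := t)
  unfold gaussKDeriv
  fun_prop

theorem norm_gaussK_le (ht : 0 < t) (z : EuclideanSpace ℝ (Fin d)) :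
    ‖gaussK t z‖ ≤ (2 * Real.pi * t) ^ (-(d : ℝ) / 2) := by
  rw [Real.norm_of_nonneg (gaussK_pos ht z).le]
  exact gaussK_le ht z

theorem norm_gaussKDeriv_le (ht : 0 < t) (z : EuclideanSpace ℝ (Fin d)) :
    ‖gaussKDeriv t z‖ ≤ t⁻¹ * (2 * Real.pi * t) ^ (-(d : ℝ) / 2) * (√(2 * t) / 2) := by
  calc ‖gaussKDeriv t z‖
      = t⁻¹ * (2 * Real.pi * t) ^ (-(d : ℝ) / 2) * (‖z‖ * Real.exp (-‖z‖ ^ 2 / (2 * t))) := by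
        rw [gaussKDeriv, norm_smul, innerSL_apply_norm, norm_neg, Real.norm_of_nonneg
          (mul_pos (inv_pos.2 ht) (gaussK_pos ht z)).le, gaussK]
        ring
    _ ≤ _ := mul_le_mul_of_nonneg_left (Real.mul_exp_neg_sq_div_le (by positivity) _)
        (by positivity)

end GaussianKernel

section GibbsSmoothing

variable {d : ℕ} {lam : ℝ} {f : EuclideanSpace ℝ (Fin d) → ℝ} {t : ℝ}

theorem smoothedDensity_eq (t : ℝ) (x : EuclideanSpace ℝ (Fin d)) :
    smoothedDensity lam f t x
      = (∫ z, Real.exp (-f z / lam))⁻¹ * ∫ y, Real.exp (-f y / lam) * gaussK t (x - y) := by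
  rw [smoothedDensity, ← integral_const_mul]
  congr 1 with y
  rw [gibbs]
  ring

theorem integrable_exp_neg_div_mul_gaussK (hZfin : Integrable (fun z => Real.exp (-f z / lam)))
    (ht : 0 < t) (x : EuclideanSpace ℝ (Fin d)) :
    Integrable (fun y => Real.exp (-f y / lam) * gaussK t (x - y)) :=
  hZfin.mul_bdd (continuous_gaussK.comp (continuous_sub_left x)).aestronglyMeasurable
    (Filter.Eventually.of_forall fun _ => norm_gaussK_le ht _)

theorem smoothedDensity_pos (hZpos : 0 < ∫ z, Real.exp (-f z / lam))
    (hZfin : Integrable (fun z => Real.exp (-f z / lam))) (ht : 0 < t)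
    (x : EuclideanSpace ℝ (Fin d)) : 0 < smoothedDensity lam f t x := by
  have hpos : ∀ y, 0 < Real.exp (-f y / lam) * gaussK t (x - y) := fun y =>
    mul_pos (Real.exp_pos _) (gaussK_pos ht _)
  rw [smoothedDensity_eq]
  refine mul_pos (inv_pos.2 hZpos) ?_
  rw [integral_pos_iff_support_of_nonneg (fun y => (hpos y).le)
    (integrable_exp_neg_div_mul_gaussK hZfin ht x), Function.support_eq_univ fun y => (hpos y).ne']
  exact isOpen_univ.measure_pos _ Set.univ_nonempty

theorem hasFDerivAt_exp_neg_div {y : EuclideanSpace ℝ (Fin d)} (hf : DifferentiableAt ℝ f y) :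
    HasFDerivAt (fun y => Real.exp (-f y / lam))
      (-lam⁻¹ • Real.exp (-f y / lam) • fderiv ℝ f y) y := by
  refine ((hf.hasFDerivAt.const_mul (-lam⁻¹)).exp.congr_of_eventuallyEq ?_).congr_fderiv ?_
  · exact Filter.Eventually.of_forall fun w => by ring_nf
  · rw [smul_comm]
    ring_nf

theorem hasFDerivAt_smoothedObj (hlam : lam ≠ 0) (hZpos : 0 < ∫ z, Real.exp (-f z / lam))
    (hZfin : Integrable (fun z => Real.exp (-f z / lam))) (hC1 : ContDiff ℝ 1 f)
    (hgradint : Integrable (fun y => ‖gradient f y‖ * Real.exp (-f y / lam)))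
    (ht : 0 < t) (x : EuclideanSpace ℝ (Fin d)) :
    HasFDerivAt (smoothedObj lam f t) (∫ y, posterior lam f t x y • fderiv ℝ f y) x := by
  set Z := ∫ z, Real.exp (-f z / lam) with hZ
  have hf_diff := hC1.differentiable one_ne_zero
  have hexp_fderiv_int : Integrable fun y => Real.exp (-f y / lam) • fderiv ℝ f y := by
    refine (integrable_norm_iff ?_).1 ?_
    · exact ((hC1.continuous.neg.div_const lam).rexp.smul
        (hC1.continuous_fderiv one_ne_zero)).aestronglyMeasurable
    · simpa [norm_smul, gradient, mul_comm] using hgradint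
  have hnum := hasFDerivAt_integral_mul_comp_sub hZfin
    (fun y => hasFDerivAt_exp_neg_div (hf_diff y)) (hexp_fderiv_int.smul (-lam⁻¹))
    hasFDerivAt_gaussK continuous_gaussKDeriv (norm_gaussK_le ht) (norm_gaussKDeriv_le ht) x
  have hdens : HasFDerivAt (smoothedDensity lam f t)
      (Z⁻¹ • ∫ y, gaussK t (x - y) • -lam⁻¹ • Real.exp (-f y / lam) • fderiv ℝ f y) x := by
    rw [funext (smoothedDensity_eq t)]
    exact hnum.const_mul Z⁻¹
  refine ((hdens.log (smoothedDensity_pos hZpos hZfin ht x).ne').const_mul (-lam)).congr_fderiv ?_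
  simp only [← integral_smul, smul_smul]
  congr 1
  funext y
  congr 1
  rw [posterior, gibbs, ← hZ]
  field_simp

end GibbsSmoothing

theorem InnerProductSpace.toDual_symm_integral {E X : Type*} [NormedAddCommGroup E]
    [InnerProductSpace ℝ E] [CompleteSpace E] [MeasurableSpace X] {μ : Measure X}
    (L : X → StrongDual ℝ E) :
    (toDual ℝ E).symm (∫ x, L x ∂μ) = ∫ x, (toDual ℝ E).symm (L x) ∂μ :=
  -- `starRingEnd ℝ` is definitionally the identity, so the conjugate-linear isometry is linear.
  (LinearIsometry.integral_comp_comm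
    ((toDual ℝ E).symm.toLinearIsometry : StrongDual ℝ E →ₗᵢ[ℝ] E) L).symm

theorem gradient_smoothed_eq_posterior_mean_gradient_general
    (d : ℕ) (lam : ℝ) (hlam : 0 < lam)
    (f : EuclideanSpace ℝ (Fin d) → ℝ)
    (hZpos : 0 < ∫ z, Real.exp (-(f z) / lam))
    (hZfin : Integrable (fun z => Real.exp (-(f z) / lam)))
    (hC1 : ContDiff ℝ 1 f)
    (hgradint : Integrable (fun y => ‖gradient f y‖ * Real.exp (-(f y) / lam)))
    (t : ℝ) (ht : 0 < t) (x : EuclideanSpace ℝ (Fin d)) :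
    gradient (fun x' => smoothedObj lam f t x') x
      = ∫ y, posterior lam f t x y • gradient f y := by
  unfold gradient
  rw [(hasFDerivAt_smoothedObj hlam.ne' hZpos hZfin hC1 hgradint ht x).fderiv,
    InnerProductSpace.toDual_symm_integral]
  simp only [map_smul]

/-- the gradient of the smoothed objective is the posterior expectation of the
gradient of `f`: `∇_x g(x;t) = ∫ ∇f(y) p_{0|t}(y|x) dy`. -/
theorem gradient_smoothed_eq_posterior_mean_gradient
    (d : ℕ) (hd : 1 ≤ d) (lam : ℝ) (hlam : 0 < lam)
    (f : EuclideanSpace ℝ (Fin d) → ℝ) (hf : Measurable f)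
    (hZpos : 0 < ∫ z, Real.exp (-(f z) / lam))
    (hZfin : Integrable (fun z => Real.exp (-(f z) / lam)))
    (hC1 : ContDiff ℝ 1 f)
    (hgradint : Integrable (fun y => ‖gradient f y‖ * Real.exp (-(f y) / lam)))
    (t : ℝ) (ht : 0 < t) (x : EuclideanSpace ℝ (Fin d)) :
    gradient (fun x' => smoothedObj lam f t x') x
      = ∫ y, posterior lam f t x y • gradient f y :=
  gradient_smoothed_eq_posterior_mean_gradient_general d lam hlam f hZpos hZfin hC1 hgradint t ht x
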